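/- arXiv:2107.03211 — 2 statements merged into one kernel-verified Lean document; each statement's English description precedes it below -/
import Mathlib

section
/- If X is an infinite compact Hausdorff space and Y is an infinite pseudocompact Tychonoff space, then there is no continuous linear surjection from C_p(X×Y) onto C_p(X, C_p(Y)). -/
open Filter Topology

set_option linter.unusedVariables false

/-- `C_p(X, E)`: the submodule of `X → E` (with the product, i.e. pointwise, topology)
consisting of all continuous functions from `X` to `E`.  The coerced type `↥(Cp X E)` carries
the subspace topology, i.e. the topology of pointwise convergence. -/
def Cp (X E : Type*) [TopologicalSpace X] [TopologicalSpace E]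
    [AddCommGroup E] [Module ℝ E] [ContinuousAdd E] [ContinuousSMul ℝ E] :
    Submodule ℝ (X → E) where
  carrier := {f | Continuous f}
  add_mem' hf hg := hf.add hg
  zero_mem' := continuous_const
  smul_mem' c f hf := hf.const_smul c

/-- `(c₀)_p`: the space of real sequences converging to `0`, as a submodule of `ℕ → ℝ`;
the coerced type carries the topology of pointwise convergence inherited from `ℝ^ℕ`. -/
def c0p : Submodule ℝ (ℕ → ℝ) where
  carrier := {x | Tendsto x atTop (𝓝 0)}
  add_mem' hx hy := by simpa [Pi.add_def] using Filter.Tendsto.add hx hy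
  zero_mem' := tendsto_const_nhds
  smul_mem' c x hx := by simpa [Pi.smul_def] using Filter.Tendsto.const_smul hx c

/-- A topological vector space `E` contains a complemented copy of `F`: there is a closed
linear subspace `E₁` of `E` which is linearly homeomorphic to `F` and a continuous linear
projection from `E` onto `E₁`. -/
def HasComplementedCopy (E : Type*) [TopologicalSpace E] [AddCommGroup E] [Module ℝ E]
    (F : Type*) [TopologicalSpace F] [AddCommGroup F] [Module ℝ F] : Prop :=
  ∃ E₁ : Submodule ℝ E, IsClosed (E₁ : Set E) ∧ Nonempty (E₁ ≃L[ℝ] F) ∧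
    ∃ P : E →L[ℝ] E, Set.range P = (E₁ : Set E) ∧ ∀ x ∈ E₁, P x = x

/-- A function `f : X × Y → ℝ` is separately continuous. -/
def SepCont {X Y : Type*} [TopologicalSpace X] [TopologicalSpace Y] (f : X × Y → ℝ) : Prop :=
  (∀ x, Continuous fun y => f (x, y)) ∧ (∀ y, Continuous fun x => f (x, y))

/-- `SC_p(X × Y)`: the submodule of `X × Y → ℝ` consisting of all separately continuous
functions; the coerced type carries the topology of pointwise convergence. -/
def SCp (X Y : Type*) [TopologicalSpace X] [TopologicalSpace Y] : Submodule ℝ (X × Y → ℝ) where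
  carrier := {f | SepCont f}
  add_mem' hf hg := ⟨fun x => (hf.1 x).add (hg.1 x), fun y => (hf.2 y).add (hg.2 y)⟩
  zero_mem' := ⟨fun _ => continuous_const, fun _ => continuous_const⟩
  smul_mem' c f hf := ⟨fun x => (hf.1 x).const_smul c, fun y => (hf.2 y).const_smul c⟩

/-- The topology `σ` on `X × Y`: the coarsest topology making every separately continuous
real-valued function on `X × Y` continuous. -/
def sigmaTop (X Y : Type*) [TopologicalSpace X] [TopologicalSpace Y] :
    TopologicalSpace (X × Y) :=
  ⨅ f : {f : X × Y → ℝ // SepCont f}, TopologicalSpace.induced f.1 inferInstance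

/-- The action of a finite linear combination `μ = Σ_z μ(z)·δ_z` of Dirac functionals
on a function `f`. -/
noncomputable def finComboApply {Z : Type*} (μ : Z →₀ ℝ) (f : Z → ℝ) : ℝ :=
  μ.sum fun z a => a * f z

/-- `μ` is a JN-sequence on the topological space `Z`: each `μ n` is a finite linear
combination of Dirac functionals of norm `Σ_z |μ n z| = 1`, and `μ n (f) → 0` for every
continuous `f : Z → ℝ`. -/
def IsJNSeq (Z : Type*) [TopologicalSpace Z] (μ : ℕ → Z →₀ ℝ) : Prop :=
  (∀ n, ((μ n).sum fun _ a => |a|) = 1) ∧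
    ∀ f : Z → ℝ, Continuous f → Tendsto (fun n => finComboApply (μ n) f) atTop (𝓝 0)

/-- `Z` admits a JN-sequence. -/
def HasJNSeq (Z : Type*) [TopologicalSpace Z] : Prop := ∃ μ, IsJNSeq Z μ

/-- A space is pseudocompact if every continuous real-valued function on it is bounded. -/
def Pseudocompact (Z : Type*) [TopologicalSpace Z] : Prop :=
  ∀ f : Z → ℝ, Continuous f → Bornology.IsBounded (Set.range f)

/-- The action of a finite linear combination `Σ_{(x,y)} ν(x,y)·(δ_x ⊗ δ_y)` of tensor
products of Dirac functionals on an element of `C_p(X, C_p(Y))`. -/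
noncomputable def tensorApply {X Y : Type*} [TopologicalSpace X] [TopologicalSpace Y]
    (ν : (X × Y) →₀ ℝ) (f : ↥(Cp X ↥(Cp Y ℝ))) : ℝ :=
  ν.sum fun p a => a * (f.1 p.1).1 p.2

/-!
As `X × Y` is pseudocompact, every element of `C_p(X × Y)` is a bounded function, so a continuous
linear surjection `T` onto `C_p(X, C_p(Y))` yields one from the Banach space `(X × Y) →ᵇ ℝ`.
Evaluating at `(x, y)` then gives continuous functionals `ψ_{x,y}` on a normed space, and every
`G = T g` satisfies `|G x y| ≤ ‖ψ_{x,y}‖ ‖g‖`: the values of `G` are dominated by a single weight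
up to a constant. But the elements of `C_p(X, C_p(Y))` are the separately continuous functions,
and with disjointly supported bumps `uₙ` on `X` and `vₙ` on `Y` the series `∑ cₙ uₙ(x) vₙ(y)` is
separately continuous (each slice has at most one nonzero term) and takes arbitrary values `cₙ`
at points `(aₙ, bₙ)`, so it outgrows every such weight.
-/

open Function BoundedContinuousFunction

namespace Cp

variable {X E : Type*} [TopologicalSpace X] [TopologicalSpace E] [AddCommGroup E] [Module ℝ E]
  [ContinuousAdd E] [ContinuousSMul ℝ E]

def evalCLM (x : X) : ↥(Cp X E) →L[ℝ] E where
  toFun f := (f : X → E) x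
  map_add' _ _ := rfl
  map_smul' _ _ := rfl
  cont := (continuous_apply x).comp continuous_subtype_val

end Cp

namespace BoundedContinuousFunction

variable {Z E : Type*} [TopologicalSpace Z] [NormedAddCommGroup E] [NormedSpace ℝ E]

def toCpCLM : (Z →ᵇ E) →L[ℝ] ↥(Cp Z E) where
  toFun f := ⟨f, f.continuous⟩
  map_add' _ _ := rfl
  map_smul' _ _ := rfl
  cont := (continuous_pi fun z => (evalCLM ℝ z).continuous).subtype_mk _

lemma toCpCLM_surjective (hZ : Pseudocompact Z) :
    Surjective (toCpCLM : (Z →ᵇ ℝ) →L[ℝ] ↥(Cp Z ℝ)) := by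
  intro f
  obtain ⟨C, hC⟩ := Metric.isBounded_range_iff.mp (hZ f f.2)
  exact ⟨.mkOfBound ⟨f, f.2⟩ C hC, rfl⟩

end BoundedContinuousFunction

lemma pseudocompact_prod_of_compactSpace {X Y : Type*} [TopologicalSpace X] [CompactSpace X]
    [TopologicalSpace Y] (hY : Pseudocompact Y) : Pseudocompact (X × Y) := by
  intro f hf
  let k : C(Y, C(X, ℝ)) := ContinuousMap.curry ⟨fun q => f (q.2, q.1), hf.comp continuous_swap⟩
  obtain ⟨C, hC⟩ := (hY _ (continuous_norm.comp k.continuous)).exists_norm_le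
  refine isBounded_iff_forall_norm_le.mpr ⟨C, ?_⟩
  rintro _ ⟨⟨x, y⟩, rfl⟩
  calc ‖f (x, y)‖ = ‖k y x‖ := rfl
    _ ≤ ‖k y‖ := (k y).norm_coe_le_norm x
    _ ≤ C := (le_abs_self _).trans (hC _ ⟨y, rfl⟩)

lemma exists_seq_continuous_pairwise_disjoint_support (Z : Type*) [TopologicalSpace Z] [T2Space Z]
    [CompletelyRegularSpace Z] [Infinite Z] :
    ∃ (z : ℕ → Z) (u : ℕ → Z → ℝ), (∀ n, Continuous (u n)) ∧ (∀ n, u n (z n) = 1) ∧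
      Pairwise (Disjoint on fun n => support (u n)) := by
  obtain ⟨U, hU, hUo, hUd⟩ := exists_seq_infinite_isOpen_pairwise_disjoint Z
  choose z hz using fun n => (hU n).nonempty
  choose f hf hfz hfU using fun n =>
    CompletelyRegularSpace.completely_regular_isOpen (z n) (U n) (hUo n) (hz n)
  have hsupp : ∀ n, support (fun w => 1 - (f n w : ℝ)) ⊆ U n := fun n w hw => by
    by_contra hwU
    exact hw (by simp [hfU n hwU])
  exact ⟨z, fun n w => 1 - (f n w : ℝ), fun n => by fun_prop, fun n => by simp [hfz n],
    fun m n hmn => (hUd hmn).mono (hsupp m) (hsupp n)⟩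

lemma exists_forall_ne_eq_zero_of_pairwise_disjoint_support {ι Z M : Type*} [Zero M]
    [Nonempty ι] {u : ι → Z → M} (hu : Pairwise (Disjoint on fun n => support (u n))) (z : Z) :
    ∃ N, ∀ m ≠ N, u m z = 0 := by
  by_cases h : ∀ m, u m z = 0
  · exact ⟨Classical.arbitrary ι, fun m _ => h m⟩
  · obtain ⟨N, hN⟩ := not_forall.mp h
    exact ⟨N, fun m hm => notMem_support.mp ((hu hm).notMem_of_mem_right hN)⟩

lemma continuous_tsum_of_forall_ne_eq_zero {ι Y M : Type*} [TopologicalSpace Y]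
    [AddCommMonoid M] [TopologicalSpace M] {F : ι → Y → M} (N : ι) (hF : ∀ m ≠ N, F m = 0)
    (hN : Continuous (F N)) : Continuous fun y => ∑' n, F n y := by
  simpa only [tsum_eq_single N fun m hm => congrFun (hF m hm) _] using hN

def SepCont.toCp {X Y : Type*} [TopologicalSpace X] [TopologicalSpace Y] {h : X × Y → ℝ}
    (hh : SepCont h) : ↥(Cp X ↥(Cp Y ℝ)) :=
  ⟨fun x => ⟨fun y => h (x, y), hh.1 x⟩, (continuous_pi hh.2).subtype_mk _⟩

lemma exists_seq_forall_exists_sepCont (X Y : Type*) [TopologicalSpace X] [T2Space X]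
    [CompletelyRegularSpace X] [Infinite X] [TopologicalSpace Y] [T2Space Y]
    [CompletelyRegularSpace Y] [Infinite Y] :
    ∃ (a : ℕ → X) (b : ℕ → Y), ∀ c : ℕ → ℝ,
      ∃ h : X × Y → ℝ, SepCont h ∧ ∀ n, h (a n, b n) = c n := by
  obtain ⟨a, u, hu, hua, hud⟩ := exists_seq_continuous_pairwise_disjoint_support X
  obtain ⟨b, v, hv, hvb, hvd⟩ := exists_seq_continuous_pairwise_disjoint_support Y
  refine ⟨a, b, fun c => ⟨fun p => ∑' n, c n * u n p.1 * v n p.2, ⟨fun x => ?_, fun y => ?_⟩,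
    fun n => ?_⟩⟩
  · obtain ⟨N, hN⟩ := exists_forall_ne_eq_zero_of_pairwise_disjoint_support hud x
    exact continuous_tsum_of_forall_ne_eq_zero N (fun m hm => by ext; simp [hN m hm])
      (by fun_prop)
  · obtain ⟨N, hN⟩ := exists_forall_ne_eq_zero_of_pairwise_disjoint_support hvd y
    exact continuous_tsum_of_forall_ne_eq_zero N (fun m hm => by ext; simp [hN m hm])
      (by fun_prop)
  · have hun : ∀ m ≠ n, u m (a n) = 0 := fun m hm =>
      notMem_support.mp ((hud hm).notMem_of_mem_right (by simp [hua n]))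
    show ∑' m, c m * u m (a n) * v m (b n) = c n
    rw [tsum_eq_single n fun m hm => by simp [hun m hm]]
    simp [hua n, hvb n]

/-- If `X` is an infinite compact Hausdorff space and `Y` is an infinite
pseudocompact Tychonoff space, then there is no continuous linear surjection from
`C_p(X×Y)` onto `C_p(X, C_p(Y))`. -/
theorem statement5 (X Y : Type*) [TopologicalSpace X] [CompactSpace X] [T2Space X]
    [Infinite X] [TopologicalSpace Y] [T35Space Y] [Infinite Y] (hY : Pseudocompact Y) :
    ¬ ∃ T : ↥(Cp (X × Y) ℝ) →L[ℝ] ↥(Cp X ↥(Cp Y ℝ)), Function.Surjective T := by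
  rintro ⟨T, hT⟩
  let ψ : X × Y → ((X × Y) →ᵇ ℝ) →L[ℝ] ℝ := fun p =>
    Cp.evalCLM p.2 ∘L Cp.evalCLM p.1 ∘L T ∘L toCpCLM
  obtain ⟨a, b, hab⟩ := exists_seq_forall_exists_sepCont X Y
  obtain ⟨h, hh, hval⟩ := hab fun n => (n + 1) * (‖ψ (a n, b n)‖ + 1)
  obtain ⟨g, hg⟩ := (hT.comp (toCpCLM_surjective (pseudocompact_prod_of_compactSpace hY))) hh.toCp
  obtain ⟨n, hn⟩ := exists_nat_ge ‖g‖
  have hψg : ψ (a n, b n) g = h (a n, b n) := by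
    simp only [ψ, ContinuousLinearMap.comp_apply]
    rw [← comp_apply (f := ⇑T), hg]
    rfl
  have hbound := (ψ (a n, b n)).le_opNorm g
  rw [hψg, hval n, Real.norm_eq_abs, abs_of_nonneg (by positivity)] at hbound
  nlinarith [norm_nonneg (ψ (a n, b n)), norm_nonneg g]
end

section
/- For every infinite compact Hausdorff space X, the spaces C_p(X) and C(X)_w are not isomorphic (linearly homeomorphic), where C(X)_w denotes the Banach space C(X) of continuous real-valued functions with the supremum norm, endowed with its weak topology. -/
open Filter Topology

set_option linter.unusedVariables false

/-! A sequence of continuous spikes `f n` with `f n (x n) = n`, supported in pairwise disjoint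
open sets, tends to `0` in `C_p(X)` but is unbounded in `C(X)`. An isomorphism
`T : C_p(X) → C(X)_w` would send it to a weakly null, hence (uniform boundedness in the bidual)
norm bounded, sequence. But the functionals `g ↦ (T⁻¹ g)(z)`, `z ∈ X`, are pointwise bounded on
the Banach space `C(X)`, so again by uniform boundedness `T⁻¹` is bounded for the sup norm, and
`f n = T⁻¹ (T (f n))` would be bounded. -/

theorem exists_norm_le_of_tendsto_toWeakSpace {𝕜 E : Type*} [RCLike 𝕜] [NormedAddCommGroup E]
    [NormedSpace 𝕜 E] {u : ℕ → E} {a : WeakSpace 𝕜 E}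
    (hu : Tendsto (fun n => toWeakSpace 𝕜 E (u n)) atTop (𝓝 a)) :
    ∃ C, ∀ n, ‖u n‖ ≤ C := by
  have hbdd : ∀ φ : StrongDual 𝕜 E,
      ∃ C, ∀ n, ‖NormedSpace.inclusionInDoubleDual 𝕜 E (u n) φ‖ ≤ C := by
    intro φ
    have hφ : Continuous fun x : WeakSpace 𝕜 E => φ x := WeakBilin.eval_continuous _ φ
    obtain ⟨C, hC⟩ := ((hφ.tendsto a).comp hu).norm.bddAbove_range
    exact ⟨C, fun n => hC ⟨n, rfl⟩⟩
  obtain ⟨C, hC⟩ := banach_steinhaus hbdd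
  refine ⟨C, fun n => ?_⟩
  rw [← (NormedSpace.inclusionInDoubleDualLi 𝕜).norm_map (u n)]
  exact hC n

def Cp.eval {X : Type*} [TopologicalSpace X] (x : X) : ↥(Cp X ℝ) →L[ℝ] ℝ where
  toFun f := f.1 x
  map_add' _ _ := rfl
  map_smul' _ _ := rfl
  cont := (continuous_apply x).comp continuous_subtype_val

theorem exists_abs_apply_le_of_compactSpace {X E : Type*} [TopologicalSpace X] [CompactSpace X]
    [NormedAddCommGroup E] [NormedSpace ℝ E] [CompleteSpace E] (S : E →L[ℝ] ↥(Cp X ℝ)) :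
    ∃ C, 0 ≤ C ∧ ∀ g z, |(S g).1 z| ≤ C * ‖g‖ := by
  have hbdd : ∀ g, ∃ C, ∀ z, ‖(Cp.eval z).comp S g‖ ≤ C := fun g =>
    ⟨‖(⟨(S g).1, (S g).2⟩ : C(X, ℝ))‖,
      fun z => ContinuousMap.norm_coe_le_norm ⟨(S g).1, (S g).2⟩ z⟩
  obtain ⟨C, hC⟩ := banach_steinhaus hbdd
  exact ⟨max C 0, le_max_right C 0, fun g z => (((Cp.eval z).comp S).le_opNorm g).trans
    (mul_le_mul_of_nonneg_right ((hC z).trans (le_max_left C 0)) (norm_nonneg g))⟩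

theorem exists_spikes (X : Type*) [TopologicalSpace X] [T2Space X] [NormalSpace X]
    [Infinite X] :
    ∃ (f : ℕ → C(X, ℝ)) (x : ℕ → X),
      (∀ n, f n (x n) = n) ∧ ∀ z, Tendsto (fun n => f n z) atTop (𝓝 0) := by
  obtain ⟨U, hU_inf, hU_open, hU_disj⟩ := exists_seq_infinite_isOpen_pairwise_disjoint X
  choose x hx using fun n => (hU_inf n).nonempty
  choose u hu_out hu_x _ using fun n =>
    exists_continuous_zero_one_of_isClosed (hU_open n).isClosed_compl isClosed_singleton
      (disjoint_compl_left.mono_right (Set.singleton_subset_iff.2 (hx n)))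
  refine ⟨fun n => (n : ℝ) • u n, x, fun n => by simp [hu_x n rfl], fun z => ?_⟩
  have hz : ∀ᶠ n in atTop, z ∉ U n := by
    by_cases h : ∃ m, z ∈ U m
    · obtain ⟨m, hm⟩ := h
      filter_upwards [eventually_gt_atTop m] with n hn hzn
      exact hU_disj hn.ne' |>.le_bot ⟨hzn, hm⟩
    · exact Eventually.of_forall (not_exists.1 h)
  refine tendsto_const_nhds.congr' ?_
  filter_upwards [hz] with n hn
  simp [hu_out n hn]

/-- For every infinite compact Hausdorff space `X`, the spaces `C_p(X)`
and `C(X)_w` — the Banach space `C(X)` with the sup-norm, endowed with its weak topology —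
are not linearly homeomorphic. -/
theorem statement19 (X : Type*) [TopologicalSpace X] [CompactSpace X] [T2Space X]
    [Infinite X] :
    ¬ Nonempty (↥(Cp X ℝ) ≃L[ℝ] WeakSpace ℝ C(X, ℝ)) := by
  rintro ⟨T⟩
  obtain ⟨f, x, hfx, hf0⟩ := exists_spikes X
  let F : ℕ → ↥(Cp X ℝ) := fun n => ⟨f n, (f n).continuous⟩
  have hF : Tendsto F atTop (𝓝 0) := by
    rw [tendsto_subtype_rng, tendsto_pi_nhds]
    exact hf0
  let G : ℕ → C(X, ℝ) := fun n => (toWeakSpace ℝ C(X, ℝ)).symm (T (F n))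
  have hG : Tendsto (fun n => toWeakSpace ℝ C(X, ℝ) (G n)) atTop (𝓝 0) := by
    simpa only [G, LinearEquiv.apply_symm_apply, map_zero, Function.comp_def]
      using (T.continuous.tendsto 0).comp hF
  obtain ⟨C', hC'⟩ := exists_norm_le_of_tendsto_toWeakSpace hG
  obtain ⟨C, hC0, hC⟩ := exists_abs_apply_le_of_compactSpace
    (T.symm.toContinuousLinearMap.comp (toWeakSpaceCLM ℝ C(X, ℝ)))
  obtain ⟨n, hn⟩ := exists_nat_gt (C * C')
  have hle : |(T.symm (T (F n))).1 (x n)| ≤ C * ‖G n‖ := hC (G n) (x n)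
  rw [T.symm_apply_apply, show (F n).1 (x n) = n from hfx n, Nat.abs_cast] at hle
  linarith [mul_le_mul_of_nonneg_left (hC' n) hC0]
end
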